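/- arXiv:2510.09859 — 5 statements merged into one kernel-verified Lean document; each statement's English description precedes it below -/
import Mathlib

section
/- Let f*(t) = (1/2)e^{-t/2} be an exponential density on [0,∞), T: [1,2] → ℝ defined by T(r) = 1/(r-1), and U(r' ∣ r) := ∫₀^{T(r')} e^{-rt} f*(t) dt. Then ∂²U/∂r∂r' ≥ 0 for all r, r' ∈ (1,2), i.e., U is supermodular. -/
/-!
With `c = r + 1/2` the integrand is `½ e^{-ct}`, so `U(r' ∣ r) = ½ (1 - e^{-cT(r')}) / c` in closed
form. Its `r`-derivative is `-½ ∫₀^{T(r')} t e^{-ct} dt`, and differentiating that in `r'` gives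
`-½ T(r') e^{-cT(r')} T'(r') ≥ 0`, because `T` is decreasing.
-/

open Real Set Topology

lemma integral_exp_neg_mul_of_ne_zero (b : ℝ) {c : ℝ} (hc : c ≠ 0) :
    ∫ t in (0:ℝ)..b, exp (-c * t) = (1 - exp (-c * b)) / c := by
  rw [intervalIntegral.integral_comp_mul_left exp (neg_ne_zero.mpr hc), integral_exp,
    mul_zero, exp_zero, smul_eq_mul]
  field_simp
  ring

/-- `-∫₀ᵇ t e^{-ct} dt`, in closed form. -/
noncomputable def negTruncatedFirstMoment (c b : ℝ) : ℝ :=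
  (b * c * exp (-c * b) - (1 - exp (-c * b))) / c ^ 2

lemma hasDerivAt_one_sub_exp_neg_mul_div (b : ℝ) {c : ℝ} (hc : c ≠ 0) :
    HasDerivAt (fun c => (1 - exp (-c * b)) / c) (negTruncatedFirstMoment c b) c := by
  have hexp : HasDerivAt (fun c => exp (-c * b)) (-b * exp (-c * b)) c := by
    simpa [mul_comm] using ((hasDerivAt_neg c).mul_const b).exp
  refine ((hexp.const_sub 1).div (hasDerivAt_id' c) hc).congr_deriv ?_
  rw [negTruncatedFirstMoment]
  ring

lemma hasDerivAt_negTruncatedFirstMoment (b : ℝ) {c : ℝ} (hc : c ≠ 0) :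
    HasDerivAt (negTruncatedFirstMoment c) (-b * exp (-c * b)) b := by
  have hexp : HasDerivAt (fun b => exp (-c * b)) (-c * exp (-c * b)) b := by
    simpa [mul_comm] using ((hasDerivAt_id b).const_mul (-c)).exp
  refine ((((hasDerivAt_id' b).mul_const c).mul hexp).sub (hexp.const_sub 1)).div_const (c ^ 2)
    |>.congr_deriv ?_
  field_simp
  ring

lemma hasDerivAt_one_div_sub_one {x : ℝ} (hx : x ≠ 1) :
    HasDerivAt (fun x => 1 / (x - 1)) (-1 / (x - 1) ^ 2) x := by
  have := ((hasDerivAt_id x).sub_const 1).fun_inv (sub_ne_zero.mpr hx)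
  simpa [one_div, div_eq_mul_inv] using this

lemma exp_neg_mul_mul_exponential_density (s t : ℝ) :
    exp (-s * t) * ((1/2) * exp (-t/2)) = (1/2) * exp (-(s + 1/2) * t) := by
  rw [mul_left_comm, ← exp_add]
  ring_nf

/-- Supermodularity of `U(r' ∣ r) = ∫₀^{T(r')} e^{-rt} f*(t) dt` with
`f*(t) = (1/2)e^{-t/2}` and `T(r') = 1/(r'-1)`: the cross partial `∂²U/∂r∂r'` is
nonnegative for `r, r' ∈ (1,2)`. -/
theorem token_menu_supermodular :
    let f : ℝ → ℝ := fun t => (1/2) * exp (-t/2)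
    let T : ℝ → ℝ := fun r' => 1 / (r' - 1)
    let U : ℝ → ℝ → ℝ := fun r' r => ∫ t in (0:ℝ)..(T r'), exp (-r * t) * f t
    ∀ r ∈ Ioo (1:ℝ) 2, ∀ r' ∈ Ioo (1:ℝ) 2,
      0 ≤ deriv (fun s' => deriv (fun s => U s' s) r) r' := by
  rintro f T U r ⟨hr1, -⟩ r' ⟨hr'1, -⟩
  have hc : r + 1/2 ≠ 0 := by linarith
  have hinner : (fun s' => deriv (fun s => U s' s) r) =
      fun s' => (1/2) * negTruncatedFirstMoment (r + 1/2) (T s') := by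
    funext s'
    have hU : (fun s => U s' s) =ᶠ[𝓝 r]
        fun s => (1/2) * ((1 - exp (-(s + 1/2) * T s')) / (s + 1/2)) := by
      filter_upwards [(continuous_add_const (1/2 : ℝ)).continuousAt.eventually_ne hc] with s hs
      simp only [U, f, exp_neg_mul_mul_exponential_density, intervalIntegral.integral_const_mul,
        integral_exp_neg_mul_of_ne_zero _ hs]
    rw [hU.deriv_eq]
    exact (((hasDerivAt_one_sub_exp_neg_mul_div (T s') hc).comp_add_const r (1/2)).const_mul
      (1/2)).deriv
  have hcross : HasDerivAt (fun s' => (1/2) * negTruncatedFirstMoment (r + 1/2) (T s'))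
      ((1/2) * (-T r' * exp (-(r + 1/2) * T r') * (-1 / (r' - 1) ^ 2))) r' :=
    ((hasDerivAt_negTruncatedFirstMoment (T r') hc).comp r'
      (hasDerivAt_one_div_sub_one hr'1.ne')).const_mul (1/2)
  rw [hinner, hcross.deriv]
  simp only [neg_mul, neg_div, mul_neg, neg_neg]
  positivity
end

section
/- Let f*(t) = (1/2)e^{-t/2} and T(r) = 1/(r-1) for r ∈ (1,2]. Then the price P(r) = ∫₀^{T(r)} e^{-rt} f*(t) dt - ∫_r² ∫₀^{T(z)} e^{-zt}·t·f*(t) dt dz evaluates in closed form to P(r) = (1/15)·(3 + 2e^{-5/2} - 5e^{-(r+1/2)/(r-1)}). -/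
open Real

/-!
Since `e^{-zt} f*(t) = e^{-(z+1/2)t} / 2`, both inner integrals are elementary: with
`a = z + 1/2` and `E(z) = e^{-a T(z)} = e^{-(z+1/2)/(z-1)}` they equal `(1 - E) / (2a)` and
`(1 - (1 + a T) E) / (2a²)`. The outer integrand then has an explicit antiderivative, and
`P(r)` collapses to `(1 - e^{-5/2}) / 5 + (e^{-5/2} - E(r)) / 3`.
-/

theorem integral_exp_neg_mul (a T : ℝ) (ha : a ≠ 0) :
    ∫ t in (0:ℝ)..T, exp (-a * t) = (1 - exp (-a * T)) / a := by
  rw [intervalIntegral.integral_comp_mul_left (fun t => exp t) (neg_ne_zero.2 ha), integral_exp]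
  simp only [mul_zero, exp_zero, smul_eq_mul]
  field_simp
  ring

theorem integral_mul_exp_neg_mul (a T : ℝ) (ha : a ≠ 0) :
    ∫ t in (0:ℝ)..T, t * exp (-a * t) = (1 - (1 + a * T) * exp (-a * T)) / a ^ 2 := by
  have hderiv : ∀ t ∈ Set.uIcc 0 T,
      HasDerivAt (fun t => -(1 + a * t) * exp (-a * t) / a ^ 2) (t * exp (-a * t)) t := by
    intro t _
    refine ((((hasDerivAt_id' t).const_mul a).const_add 1).fun_neg.fun_mul
      ((hasDerivAt_id' t).const_mul (-a)).exp).div_const (a ^ 2) |>.congr_deriv ?_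
    field_simp
    ring
  rw [intervalIntegral.integral_eq_sub_of_hasDerivAt hderiv
    (Continuous.intervalIntegrable (by fun_prop) _ _)]
  simp only [mul_zero, add_zero, exp_zero]
  ring

theorem exp_neg_mul_mul_density (z t : ℝ) :
    exp (-z * t) * ((1/2) * exp (-t/2)) = exp (-(z + 1/2) * t) / 2 := by
  rw [mul_left_comm, ← exp_add]
  ring_nf

theorem integral_exp_neg_mul_density (z T : ℝ) (hz : z + 1/2 ≠ 0) :
    ∫ t in (0:ℝ)..T, exp (-z * t) * ((1/2) * exp (-t/2))
      = (1 - exp (-(z + 1/2) * T)) / (2 * (z + 1/2)) := by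
  simp_rw [exp_neg_mul_mul_density, intervalIntegral.integral_div, integral_exp_neg_mul _ _ hz]
  field_simp

theorem integral_exp_neg_mul_id_density (z T : ℝ) (hz : z + 1/2 ≠ 0) :
    ∫ t in (0:ℝ)..T, exp (-z * t) * t * ((1/2) * exp (-t/2))
      = (1 - (1 + (z + 1/2) * T) * exp (-(z + 1/2) * T)) / (2 * (z + 1/2) ^ 2) := by
  have hintegrand (t : ℝ) :
      exp (-z * t) * t * ((1/2) * exp (-t/2)) = t * exp (-(z + 1/2) * t) / 2 := by
    rw [mul_right_comm, exp_neg_mul_mul_density]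
    ring
  simp_rw [hintegrand, intervalIntegral.integral_div, integral_mul_exp_neg_mul _ _ hz]
  field_simp

theorem hasDerivAt_exp_neg_div (z : ℝ) (hz : z ≠ 1) :
    HasDerivAt (fun z => exp (-(z + 1/2) / (z - 1)))
      (3 / (2 * (z - 1) ^ 2) * exp (-(z + 1/2) / (z - 1))) z := by
  refine (((hasDerivAt_id' z).add_const (1/2)).fun_neg.fun_div ((hasDerivAt_id' z).sub_const 1)
    (sub_ne_zero.2 hz)).exp.congr_deriv ?_
  field_simp
  ring

/-- By Leibniz's rule the outer integrand is `-(d/dz) ∫₀^{T(z)} e^{-zt} f*(t) dt` plus the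
boundary term `T'(z) e^{-z T(z)} f*(T(z)) = -E(z) / (2 (z-1)²) = -(d/dz) E(z) / 3`. -/
noncomputable def priceAntideriv (z : ℝ) : ℝ :=
  -((1 - exp (-(z + 1/2) / (z - 1))) / (2 * (z + 1/2))) - exp (-(z + 1/2) / (z - 1)) / 3

theorem hasDerivAt_priceAntideriv (z : ℝ) (hz : z ≠ 1) (hz' : z + 1/2 ≠ 0) :
    HasDerivAt priceAntideriv
      ((1 - (1 + (z + 1/2) / (z - 1)) * exp (-(z + 1/2) / (z - 1))) / (2 * (z + 1/2) ^ 2)) z := by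
  have hE := hasDerivAt_exp_neg_div z hz
  refine (((hasDerivAt_const z 1).fun_sub hE).fun_div
    (((hasDerivAt_id' z).add_const (1/2)).const_mul 2) (by simpa using hz')).fun_neg.fun_sub
    (hE.div_const 3) |>.congr_deriv ?_
  have := sub_ne_zero.2 hz
  have : 2 * z + 1 ≠ 0 := by contrapose! hz'; linarith
  field_simp
  ring

theorem integral_integral_exp_neg_mul_id_density {r s : ℝ} (hr : 1 < r) (hrs : r ≤ s) :
    ∫ z in r..s, ∫ t in (0:ℝ)..(1/(z-1)), exp (-z * t) * t * ((1/2) * exp (-t/2))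
      = priceAntideriv s - priceAntideriv r := by
  have hz (z : ℝ) (hz : z ∈ Set.uIcc r s) : 1 < z := hr.trans_le (Set.uIcc_of_le hrs ▸ hz).1
  have hinner : Set.EqOn
      (fun z => ∫ t in (0:ℝ)..(1/(z-1)), exp (-z * t) * t * ((1/2) * exp (-t/2)))
      (fun z => (1 - (1 + (z + 1/2) / (z - 1)) * exp (-(z + 1/2) / (z - 1))) / (2 * (z + 1/2) ^ 2))
      (Set.uIcc r s) := fun z hzrs => by
    simp only [integral_exp_neg_mul_id_density z _ (by linarith [hz z hzrs]), mul_one_div]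
  rw [intervalIntegral.integral_congr hinner]
  refine intervalIntegral.integral_eq_sub_of_hasDerivAt
    (fun z hzrs => hasDerivAt_priceAntideriv z (hz z hzrs).ne' (by linarith [hz z hzrs]))
    (ContinuousOn.intervalIntegrable ?_)
  fun_prop (disch := intro x hx; apply ne_of_gt; nlinarith [hz x hx])

/-- Closed form of the optimal token price schedule in the leading example:
`P(r) = ∫₀^{T(r)} e^{-rt} f*(t) dt - ∫_r² ∫₀^{T(z)} e^{-zt}·t·f*(t) dt dz`
with `f*(t) = (1/2)e^{-t/2}` and `T(r) = 1/(r-1)` equals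
`(1/15)(3 + 2e^{-5/2} - 5e^{-(r+1/2)/(r-1)})`. -/
theorem token_price_closed_form (r : ℝ) (hr : r ∈ Set.Ioc (1:ℝ) 2) :
    (∫ t in (0:ℝ)..(1/(r-1)), exp (-r * t) * ((1/2) * exp (-t/2)))
      - (∫ z in r..(2:ℝ), ∫ t in (0:ℝ)..(1/(z-1)), exp (-z * t) * t * ((1/2) * exp (-t/2)))
    = (1/15) * (3 + 2 * exp (-5/2) - 5 * exp (-(r + 1/2)/(r - 1))) := by
  obtain ⟨hr1, hr2⟩ := hr
  rw [integral_exp_neg_mul_density r _ (by linarith), mul_one_div,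
    integral_integral_exp_neg_mul_id_density hr1 hr2, priceAntideriv, priceAntideriv]
  have := sub_ne_zero.2 hr1.ne'
  norm_num
  field_simp
  ring
end

section
/- Let ζ: [0,∞) → ℝ be continuous with ζ(t) ≥ ζ̲ > 0, let ρ be C², strictly convex, decreasing with ρ'(t) → 0 suitably fast, and define Λ(t) = ∫_t^∞ (e^{∫_s^t χ/ζ(z) dz} · (-ρ'(s))/ζ(s)) ds for a constant χ > 0. Then Λ solves the ODE Λ'(t) = (ρ'(t) + χΛ(t))/ζ(t) with Λ(t) → 0 as t → ∞, and Λ is strictly decreasing (i.e., λ := -Λ' > 0 everywhere). -/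
/-!
Write `c = χ / ζ > 0` and `f = -ρ' / ζ`, so that `Λ t = ∫_t^∞ e^{∫_s^t c} f(s) ds`. Splitting the
kernel at a base point `b` gives `Λ t = e^{∫_b^t c} · ∫_t^∞ e^{∫_s^b c} f(s) ds`, and the product
rule yields `Λ' = c Λ - f`, which is the ODE. Since `c ≥ 0` the kernel is at most `1` on `s ≥ t`,
so `|Λ t| ≤ ∫_t^∞ |f| → 0`.

For strict decrease, `c t Λ t = c t ∫_t^∞ w(s) (f / c)(s) ds` with the weight
`w(s) = c s e^{∫_s^t c}`, whose total mass is at most `1` because `-e^{∫_s^t c}` is a primitive of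
`w` bounded by `0`. As `f / c = -ρ' / χ` is strictly decreasing (strict convexity) and nonnegative
(monotonicity of `ρ`), this average lies strictly below `(f / c)(t)`; hence `c Λ < f` and `Λ' < 0`.
-/

open Real Set Filter MeasureTheory
open scoped Topology

lemma setIntegral_mul_lt_of_forall_lt {X : Type*} [MeasurableSpace X] {μ : Measure X}
    {s : Set X} {w r : X → ℝ} {R : ℝ} (hs : MeasurableSet s) (hμs : μ s ≠ 0)
    (hw : ∀ x ∈ s, 0 < w x) (hwi : IntegrableOn w s μ) (hw1 : ∫ x in s, w x ∂μ ≤ 1)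
    (hwr : IntegrableOn (fun x => w x * r x) s μ) (hr : ∀ x ∈ s, r x < R) (hR : 0 ≤ R) :
    ∫ x in s, w x * r x ∂μ < R := by
  have hgap : 0 < ∫ x in s, (w x * R - w x * r x) ∂μ := by
    have hpos : ∀ x ∈ s, 0 < w x * R - w x * r x := fun x hx => by
      rw [← mul_sub]
      exact mul_pos (hw x hx) (sub_pos.2 (hr x hx))
    rw [setIntegral_pos_iff_support_of_nonneg_ae
      ((ae_restrict_iff' hs).2 (ae_of_all _ fun x hx => (hpos x hx).le))
      ((hwi.mul_const R).sub hwr),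
      inter_eq_right.2 fun x hx => Function.mem_support.2 (hpos x hx).ne']
    exact pos_iff_ne_zero.2 hμs
  rw [integral_sub (hwi.mul_const R) hwr, integral_mul_const] at hgap
  nlinarith

lemma tendsto_integral_Ioi_atTop {E : Type*} [NormedAddCommGroup E] [NormedSpace ℝ E]
    {g : ℝ → E} {a : ℝ} (hg : IntegrableOn g (Ioi a)) :
    Tendsto (fun t => ∫ s in Ioi t, g s) atTop (𝓝 0) := by
  have h := tendsto_setIntegral_of_antitone (μ := volume) (fun t : ℝ => measurableSet_Ioi)
    (fun _ _ hst => Ioi_subset_Ioi hst) ⟨a, hg⟩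
  rwa [show ⋂ t : ℝ, Ioi t = ∅ from iInter_eq_empty_iff.2 fun x => ⟨x, lt_irrefl x⟩,
    setIntegral_empty] at h

lemma integrableOn_Ioi_of_continuous {E : Type*} [NormedAddCommGroup E] {g : ℝ → E} {b : ℝ}
    (hg : Continuous g) (hb : IntegrableOn g (Ioi b)) (a : ℝ) : IntegrableOn g (Ioi a) := by
  rcases le_total a b with hab | hba
  · rw [← Ioc_union_Ioi_eq_Ioi hab]
    exact (hg.integrableOn_Icc.mono_set Ioc_subset_Icc_self).union hb
  · exact hb.mono_set (Ioi_subset_Ioi hba)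

lemma hasDerivAt_integral_Ioi {E : Type*} [NormedAddCommGroup E] [NormedSpace ℝ E]
    [CompleteSpace E] {g : ℝ → E} {a t : ℝ} (hg : Continuous g) (hga : IntegrableOn g (Ioi a))
    (hat : a < t) :
    HasDerivAt (fun x => ∫ s in Ioi x, g s) (-g t) t := by
  have hprim : HasDerivAt (fun x => (∫ s in Ioi a, g s) - ∫ s in a..x, g s) (-g t) t :=
    (hg.integral_hasStrictDerivAt a t).hasDerivAt.const_sub _
  refine hprim.congr_of_eventuallyEq ?_
  filter_upwards [Ioi_mem_nhds hat] with x hx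
  rw [← intervalIntegral.integral_Ioi_sub_Ioi hga hx.le, sub_sub_cancel]

lemma deriv_nonpos_of_antitoneOn {g : ℝ → ℝ} {s : Set ℝ} {x : ℝ} (hg : AntitoneOn g s)
    (hs : s ∈ 𝓝 x) : deriv g x ≤ 0 := by
  rw [← derivWithin_of_mem_nhds hs]
  exact hg.derivWithin_nonpos

lemma MeasureTheory.IntegrableOn.div_of_le {g h : ℝ → ℝ} {s : Set ℝ} {m : ℝ}
    (hg : IntegrableOn g s) (hh : Continuous h) (hm : 0 < m) (hmh : ∀ x, m ≤ h x) :
    IntegrableOn (fun x => g x / h x) s := by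
  refine (hg.norm.div_const m).mono' (hg.aestronglyMeasurable.div₀ hh.aestronglyMeasurable)
    (ae_of_all _ fun x => ?_)
  rw [norm_div, norm_of_nonneg (hm.trans_le (hmh x)).le]
  exact div_le_div_of_nonneg_left (norm_nonneg _) hm (hmh x)

section Kernel

variable {c : ℝ → ℝ}

lemma exp_integral_le_one (hc0 : ∀ z, 0 ≤ c z) {s t : ℝ} (hts : t ≤ s) :
    exp (∫ z in s..t, c z) ≤ 1 := by
  rw [exp_le_one_iff, intervalIntegral.integral_symm, neg_nonpos]
  exact intervalIntegral.integral_nonneg hts fun z _ => hc0 z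

lemma hasDerivAt_exp_integral (hc : Continuous c) (s t : ℝ) :
    HasDerivAt (fun x => exp (∫ z in x..t, c z)) (exp (∫ z in s..t, c z) * -c s) s :=
  (intervalIntegral.integral_hasDerivAt_left (hc.intervalIntegrable _ _)
    (hc.stronglyMeasurableAtFilter _ _) hc.continuousAt).exp

lemma continuous_exp_integral (hc : Continuous c) (t : ℝ) :
    Continuous fun s => exp (∫ z in s..t, c z) :=
  continuous_iff_continuousAt.2 fun s => (hasDerivAt_exp_integral hc s t).continuousAt

lemma integrableOn_exp_integral_mul (hc : Continuous c) (hc0 : ∀ z, 0 ≤ c z) {f : ℝ → ℝ}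
    {t : ℝ} (hf : IntegrableOn f (Ioi t)) :
    IntegrableOn (fun s => exp (∫ z in s..t, c z) * f s) (Ioi t) := by
  refine hf.norm.mono' ((continuous_exp_integral hc t).aestronglyMeasurable.mul
    hf.aestronglyMeasurable) ((ae_restrict_iff' measurableSet_Ioi).2 (ae_of_all _ fun s hs => ?_))
  rw [norm_mul, norm_of_nonneg (exp_pos _).le]
  exact mul_le_of_le_one_left (norm_nonneg _) (exp_integral_le_one hc0 (le_of_lt hs))

lemma hasDerivAt_neg_exp_integral (hc : Continuous c) (s t : ℝ) :
    HasDerivAt (fun x => -exp (∫ z in x..t, c z)) (c s * exp (∫ z in s..t, c z)) s :=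
  (hasDerivAt_exp_integral hc s t).neg.congr_deriv (by ring)

lemma exists_tendsto_neg_exp_integral (hc : Continuous c) (hc0 : ∀ z, 0 ≤ c z) (t : ℝ) :
    ∃ l ≤ 0, Tendsto (fun s => -exp (∫ z in s..t, c z)) atTop (𝓝 l) := by
  have hmono : Monotone fun s => -exp (∫ z in s..t, c z) :=
    monotone_of_deriv_nonneg (fun s => (hasDerivAt_neg_exp_integral hc s t).differentiableAt)
      fun s => (hasDerivAt_neg_exp_integral hc s t).deriv ▸ mul_nonneg (hc0 s) (exp_pos _).le
  have hbdd : BddAbove (range fun s => -exp (∫ z in s..t, c z)) :=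
    ⟨0, by rintro _ ⟨s, rfl⟩; exact neg_nonpos.2 (exp_pos _).le⟩
  exact ⟨_, ciSup_le fun s => neg_nonpos.2 (exp_pos _).le, tendsto_atTop_ciSup hmono hbdd⟩

lemma integrableOn_mul_exp_integral (hc : Continuous c) (hc0 : ∀ z, 0 ≤ c z) (t : ℝ) :
    IntegrableOn (fun s => c s * exp (∫ z in s..t, c z)) (Ioi t) := by
  obtain ⟨l, -, hl⟩ := exists_tendsto_neg_exp_integral hc hc0 t
  exact integrableOn_Ioi_deriv_of_nonneg' (fun s _ => hasDerivAt_neg_exp_integral hc s t)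
    (fun s _ => mul_nonneg (hc0 s) (exp_pos _).le) hl

lemma integral_mul_exp_integral_le_one (hc : Continuous c) (hc0 : ∀ z, 0 ≤ c z) (t : ℝ) :
    ∫ s in Ioi t, c s * exp (∫ z in s..t, c z) ≤ 1 := by
  obtain ⟨l, hl0, hl⟩ := exists_tendsto_neg_exp_integral hc hc0 t
  rw [integral_Ioi_of_hasDerivAt_of_tendsto' (fun s _ => hasDerivAt_neg_exp_integral hc s t)
    (integrableOn_mul_exp_integral hc hc0 t) hl]
  simp only [intervalIntegral.integral_same, exp_zero]
  linarith

noncomputable def dualMultiplier (c f : ℝ → ℝ) (t : ℝ) : ℝ :=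
  ∫ s in Ioi t, exp (∫ z in s..t, c z) * f s

variable {f : ℝ → ℝ}

lemma dualMultiplier_eq_exp_mul (hc : Continuous c) (b t : ℝ) :
    dualMultiplier c f t =
      exp (∫ z in b..t, c z) * ∫ s in Ioi t, exp (∫ z in s..b, c z) * f s := by
  rw [dualMultiplier, ← integral_const_mul]
  refine setIntegral_congr_fun measurableSet_Ioi fun s _ => ?_
  rw [← intervalIntegral.integral_add_adjacent_intervals (hc.intervalIntegrable s b)
    (hc.intervalIntegrable b t), exp_add]
  ring

lemma hasDerivAt_dualMultiplier (hc : Continuous c) (hc0 : ∀ z, 0 ≤ c z) (hf : Continuous f)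
    {a : ℝ} (hfi : IntegrableOn f (Ioi a)) (t : ℝ) :
    HasDerivAt (dualMultiplier c f) (c t * dualMultiplier c f t - f t) t := by
  set b := t - 1
  have hE : HasDerivAt (fun x => exp (∫ z in b..x, c z)) (exp (∫ z in b..t, c z) * c t) t :=
    (hc.integral_hasStrictDerivAt b t).hasDerivAt.exp
  have hG : HasDerivAt (fun x => ∫ s in Ioi x, exp (∫ z in s..b, c z) * f s)
      (-(exp (∫ z in t..b, c z) * f t)) t :=
    hasDerivAt_integral_Ioi ((continuous_exp_integral hc b).mul hf)
      (integrableOn_exp_integral_mul hc hc0 (integrableOn_Ioi_of_continuous hf hfi b))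
      (sub_one_lt t)
  have hinv : exp (∫ z in b..t, c z) * exp (∫ z in t..b, c z) = 1 := by
    rw [← exp_add, intervalIntegral.integral_symm t b, neg_add_cancel, exp_zero]
  rw [funext (dualMultiplier_eq_exp_mul (f := f) hc b)]
  refine (hE.mul hG).congr_deriv ?_
  linear_combination -f t * hinv

lemma tendsto_dualMultiplier_atTop (hc0 : ∀ z, 0 ≤ c z) {a : ℝ}
    (hfi : IntegrableOn f (Ioi a)) : Tendsto (dualMultiplier c f) atTop (𝓝 0) := by
  refine squeeze_zero_norm' ?_ (tendsto_integral_Ioi_atTop hfi.norm)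
  filter_upwards [eventually_ge_atTop a] with t hat
  refine norm_integral_le_of_norm_le (hfi.mono_set (Ioi_subset_Ioi hat)).norm
    ((ae_restrict_iff' measurableSet_Ioi).2 (ae_of_all _ fun s hs => ?_))
  rw [norm_mul, norm_of_nonneg (exp_pos _).le]
  exact mul_le_of_le_one_left (norm_nonneg _) (exp_integral_le_one hc0 (le_of_lt hs))

lemma mul_dualMultiplier_lt (hc : Continuous c) (hcpos : ∀ z, 0 < c z) {t : ℝ}
    (hfi : IntegrableOn f (Ioi t)) (hr : ∀ s, t < s → f s / c s < f t / c t)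
    (hr0 : 0 ≤ f t / c t) : c t * dualMultiplier c f t < f t := by
  have hc0 : ∀ z, 0 ≤ c z := fun z => (hcpos z).le
  have hweight : ∀ s, exp (∫ z in s..t, c z) * f s
      = c s * exp (∫ z in s..t, c z) * (f s / c s) := fun s => by
    field_simp [(hcpos s).ne']
  have havg : dualMultiplier c f t < f t / c t := by
    rw [dualMultiplier, integral_congr_ae (ae_of_all _ hweight)]
    refine setIntegral_mul_lt_of_forall_lt measurableSet_Ioi (by simp)
      (fun s _ => mul_pos (hcpos s) (exp_pos _)) (integrableOn_mul_exp_integral hc hc0 t)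
      (integral_mul_exp_integral_le_one hc hc0 t) ?_ (fun s hs => hr s hs) hr0
    exact (integrableOn_exp_integral_mul hc hc0 hfi).congr_fun (fun s _ => hweight s)
      measurableSet_Ioi
  calc c t * dualMultiplier c f t < c t * (f t / c t) := mul_lt_mul_of_pos_left havg (hcpos t)
    _ = f t := mul_div_cancel₀ _ (hcpos t).ne'

lemma strictAntiOn_dualMultiplier (hc : Continuous c) (hcpos : ∀ z, 0 < c z) (hf : Continuous f)
    {a : ℝ} (hfi : IntegrableOn f (Ioi a)) (hr : StrictAntiOn (fun s => f s / c s) (Ioi a))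
    (hr0 : ∀ t ∈ Ioi a, 0 ≤ f t / c t) : StrictAntiOn (dualMultiplier c f) (Ici a) := by
  have hderiv := hasDerivAt_dualMultiplier hc (fun z => (hcpos z).le) hf hfi
  refine strictAntiOn_of_deriv_neg (convex_Ici a)
    (fun t _ => (hderiv t).continuousAt.continuousWithinAt) fun t ht => ?_
  rw [interior_Ici] at ht
  rw [(hderiv t).deriv, sub_neg]
  exact mul_dualMultiplier_lt hc hcpos (hfi.mono_set (Ioi_subset_Ioi (le_of_lt ht)))
    (fun s hs => hr ht (ht.trans hs) hs) (hr0 t ht)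

end Kernel

theorem dual_multiplier_construction_general
    (χ zlo : ℝ) (hχ : 0 < χ) (hzlo : 0 < zlo)
    (ζ : ℝ → ℝ) (hζc : Continuous ζ) (hζ : ∀ t, zlo ≤ ζ t)
    (ρ : ℝ → ℝ) (hρ : ContDiff ℝ 2 ρ)
    (hρconv : StrictConvexOn ℝ (Ici 0) ρ) (hρdec : StrictAntiOn ρ (Ici 0))
    (hρ' : IntegrableOn (fun s => -deriv ρ s) (Ioi 0)) :
    let Λ : ℝ → ℝ := fun t => ∫ s in Ioi t, exp (∫ z in s..t, χ / ζ z) * (-deriv ρ s) / ζ s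
    (∀ t ≥ (0:ℝ), HasDerivAt Λ ((deriv ρ t + χ * Λ t) / ζ t) t) ∧
    Tendsto Λ atTop (nhds 0) ∧
    StrictAntiOn Λ (Ici 0) := by
  intro Λ
  have hζpos : ∀ t, 0 < ζ t := fun t => hzlo.trans_le (hζ t)
  have hc : Continuous fun z => χ / ζ z := continuous_const.div hζc fun z => (hζpos z).ne'
  have hcpos : ∀ z, 0 < χ / ζ z := fun z => div_pos hχ (hζpos z)
  have hf : Continuous fun s => -deriv ρ s / ζ s :=
    (hρ.continuous_deriv (by norm_num)).neg.div hζc fun z => (hζpos z).ne'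
  have hfi : IntegrableOn (fun s => -deriv ρ s / ζ s) (Ioi 0) := hρ'.div_of_le hζc hzlo hζ
  have hρ'mono : StrictMonoOn (deriv ρ) (Ici 0) :=
    hρconv.strictMonoOn_deriv fun x _ => (hρ.differentiable (by norm_num)) x
  have hratio : ∀ s, -deriv ρ s / ζ s / (χ / ζ s) = -deriv ρ s / χ := fun s => by
    field_simp [(hζpos s).ne']
  have hΛ : Λ = dualMultiplier (fun z => χ / ζ z) fun s => -deriv ρ s / ζ s :=
    funext fun t => integral_congr_ae (ae_of_all _ fun s => mul_div_assoc _ _ _)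
  refine ⟨fun t _ => ?_, hΛ ▸ tendsto_dualMultiplier_atTop (fun z => (hcpos z).le) hfi,
    hΛ ▸ strictAntiOn_dualMultiplier hc hcpos hf hfi (fun t ht s hs hts => ?_) fun t ht => ?_⟩
  · refine hΛ ▸ (hasDerivAt_dualMultiplier hc (fun z => (hcpos z).le) hf hfi t).congr_deriv ?_
    field_simp
    ring
  · simp only [hratio]
    exact div_lt_div_of_pos_right (neg_lt_neg (hρ'mono (Ioi_subset_Ici_self ht)
      (Ioi_subset_Ici_self hs) hts)) hχ
  · rw [hratio]
    exact div_nonneg (neg_nonneg.2 (deriv_nonpos_of_antitoneOn hρdec.antitoneOn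
      (Ici_mem_nhds (mem_Ioi.1 ht)))) hχ.le

/-- The dual multiplier construction: `Λ(t) = ∫_t^∞ e^{∫_s^t χ/ζ(z) dz}·(-ρ'(s))/ζ(s) ds`
solves the ODE `Λ'(t) = (ρ'(t) + χΛ(t))/ζ(t)`, vanishes at infinity, and is strictly
decreasing (so that `λ = -Λ' > 0`). -/
theorem dual_multiplier_construction
    (χ zlo : ℝ) (hχ : 0 < χ) (hzlo : 0 < zlo)
    (ζ : ℝ → ℝ) (hζc : Continuous ζ) (hζ : ∀ t, zlo ≤ ζ t)
    (ρ : ℝ → ℝ) (hρ : ContDiff ℝ 2 ρ)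
    (hρconv : StrictConvexOn ℝ (Ici 0) ρ) (hρdec : StrictAntiOn ρ (Ici 0))
    (hρ' : IntegrableOn (fun s => -deriv ρ s) (Ioi 0))
    (hint : ∀ t : ℝ, IntegrableOn
      (fun s => exp (∫ z in s..t, χ / ζ z) * (-deriv ρ s) / ζ s) (Ioi t)) :
    let Λ : ℝ → ℝ := fun t => ∫ s in Ioi t, exp (∫ z in s..t, χ / ζ z) * (-deriv ρ s) / ζ s
    (∀ t ≥ (0:ℝ), HasDerivAt Λ ((deriv ρ t + χ * Λ t) / ζ t) t) ∧
    Tendsto Λ atTop (nhds 0) ∧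
    StrictAntiOn Λ (Ici 0) :=
  dual_multiplier_construction_general χ zlo hχ hzlo ζ hζc hζ ρ hρ hρconv hρdec hρ'
end

section
/- For the KL-divergence case H(μ) = Σ_θ μ(θ) log μ(θ) on the interior of the simplex Δ(Θ), the Bregman divergence is D(e_θ ∣ μ) = -log μ(θ), and it satisfies: (i) min_θ D(e_θ ∣ μ) ≤ log n for all μ ∈ Δ(Θ) with |Θ| = n; (ii) if μ(θ) ≤ 1/n · min_{θ'≠θ} μ(θ') then D(e_θ ∣ μ) > min_{θ'≠θ} D(e_{θ'} ∣ μ) whenever μ(θ) < max_{θ'} μ(θ'); (iii) for θ ≠ θ', the directional derivative (e_θ - μ)·∇_μ D(e_{θ'} ∣ μ) = -(𝟙{θ=θ'} - μ(θ'))/μ(θ') ≤ 0 when θ ≠ θ'. -/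
/-!
Write `φ t = t log t`. Near an interior belief `μ` the homogeneous extension equals
`∑ φ (x i) - φ (∑ x)`, a combination of compositions of `φ` with linear functionals, and
`φ'' t = 1 / t`; hence its Hessian at `μ` is `(u, v) ↦ ∑ u i v i / μ i - (∑ u) (∑ v)`. For
`u = e_θ - μ`, `v = e_θ' - μ` with `θ ≠ θ'` this equals `-1`. The divergence to a degenerate
belief is `D(e_θ ∣ μ) = -log μ(θ)`, which decreases in `μ(θ)`, and the most likely state has
`μ(θ) ≥ 1/n`.
-/

open Real Finset

section CompLinear

variable {E : Type*} [NormedAddCommGroup E] [NormedSpace ℝ E]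

theorem iteratedFDeriv_comp_clm_apply_of_contDiffOn {f : ℝ → ℝ} {s : Set ℝ} {k : ℕ}
    (hs : IsOpen s) (hf : ContDiffOn ℝ k f s) (L : E →L[ℝ] ℝ) {x : E} (hx : L x ∈ s)
    (m : Fin k → E) :
    iteratedFDeriv ℝ k (fun y => f (L y)) x m = (∏ j, L (m j)) * iteratedDeriv k f (L x) := by
  have hs' : IsOpen (L ⁻¹' s) := hs.preimage L.continuous
  have h := L.iteratedFDerivWithin_comp_right hf hs.uniqueDiffOn hs'.uniqueDiffOn hx le_rfl
  rw [iteratedFDerivWithin_of_isOpen k hs' hx, iteratedFDerivWithin_of_isOpen k hs hx] at h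
  simp only [Function.comp_def] at h
  simp only [h, ContinuousMultilinearMap.compContinuousLinearMap_apply,
    iteratedFDeriv_apply_eq_iteratedDeriv_mul_prod, smul_eq_mul]

theorem iteratedFDeriv_two_mul_log_comp_clm (L : E →L[ℝ] ℝ) {x : E} (hx : L x ≠ 0)
    (u v : E) :
    iteratedFDeriv ℝ 2 (fun y => L y * log (L y)) x ![u, v] = L u * L v / L x := by
  rw [iteratedFDeriv_comp_clm_apply_of_contDiffOn (f := fun t => t * log t) isOpen_compl_singleton
    (contDiffOn_id.mul contDiffOn_log) L hx, iteratedDeriv_eq_iterate, deriv2_mul_log]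
  simp only [Fin.prod_univ_two, Matrix.cons_val_zero, Matrix.cons_val_one,
    Matrix.cons_val_fin_one, div_eq_mul_inv]

theorem contDiffAt_mul_log_comp_clm {n : WithTop ℕ∞} (L : E →L[ℝ] ℝ) {x : E} (hx : L x ≠ 0) :
    ContDiffAt ℝ n (fun y => L y * log (L y)) x :=
  L.contDiff.contDiffAt.mul ((contDiffAt_log.mpr hx).comp x L.contDiff.contDiffAt)

end CompLinear

section Entropy

variable {ι : Type*} [Fintype ι]

theorem sum_mul_log_div_sum_eventuallyEq {x : ι → ℝ} (hx : ∀ i, x i ≠ 0) (hS : ∑ i, x i ≠ 0) :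
    (fun y : ι → ℝ => ∑ i, y i * log (y i / ∑ j, y j)) =ᶠ[nhds x]
      fun y => ∑ i, y i * log (y i) - (∑ j, y j) * log (∑ j, y j) := by
  have hcont : Continuous fun y : ι → ℝ => ∑ j, y j := by fun_prop
  have hne : ∀ᶠ y in nhds x, (∀ i, y i ≠ 0) ∧ ∑ j, y j ≠ 0 :=
    (Filter.eventually_all.mpr fun i => (continuous_apply i).continuousAt.eventually_ne (hx i)).and
      (hcont.continuousAt.eventually_ne hS)
  filter_upwards [hne] with y ⟨hy, hyS⟩
  simp only [log_div (hy _) hyS, mul_sub, sum_sub_distrib, sum_mul]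

theorem iteratedFDeriv_two_sum_mul_log_div_sum {x : ι → ℝ} (hx : ∀ i, x i ≠ 0)
    (hS : ∑ i, x i ≠ 0) (u v : ι → ℝ) :
    iteratedFDeriv ℝ 2 (fun y : ι → ℝ => ∑ i, y i * log (y i / ∑ j, y j)) x ![u, v] =
      ∑ i, u i * v i / x i - (∑ i, u i) * (∑ i, v i) / ∑ i, x i := by
  set S : (ι → ℝ) →L[ℝ] ℝ := ∑ i, ContinuousLinearMap.proj i
  have hS_apply : ∀ y, S y = ∑ i, y i := fun y => by simp [S]
  have hproj : ∀ i, ContDiffAt ℝ 2 (fun y : ι → ℝ => y i * log (y i)) x := fun i =>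
    contDiffAt_mul_log_comp_clm (ContinuousLinearMap.proj (R := ℝ) (φ := fun _ : ι => ℝ) i) (hx i)
  have hSx : S x ≠ 0 := by rwa [hS_apply]
  have hsplit : (fun y : ι → ℝ => ∑ i, y i * log (y i) - (∑ j, y j) * log (∑ j, y j)) =
      (fun y => ∑ i, y i * log (y i)) - fun y => S y * log (S y) := by
    funext y; simp only [Pi.sub_apply, hS_apply]
  rw [((sum_mul_log_div_sum_eventuallyEq hx hS).iteratedFDeriv ℝ 2).eq_of_nhds, hsplit,
    iteratedFDeriv_sub_apply (ContDiffAt.sum fun i _ => hproj i)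
      (contDiffAt_mul_log_comp_clm S hSx), iteratedFDeriv_fun_sum_apply fun i _ => hproj i,
    sub_apply, _root_.sum_apply,
    iteratedFDeriv_two_mul_log_comp_clm S hSx]
  have hcoord : ∀ i, iteratedFDeriv ℝ 2 (fun y : ι → ℝ => y i * log (y i)) x ![u, v] =
      u i * v i / x i := fun i =>
    iteratedFDeriv_two_mul_log_comp_clm (ContinuousLinearMap.proj (R := ℝ) (φ := fun _ : ι => ℝ) i)
      (hx i) u v
  simp only [hcoord, hS_apply]

theorem exists_neg_log_le_log_card {μ : ι → ℝ} (hsum : ∑ i, μ i = 1) :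
    ∃ θ, -log (μ θ) ≤ log (Fintype.card ι) := by
  have hne : (univ : Finset ι).Nonempty :=
    univ_nonempty_iff.mpr (not_isEmpty_iff.mp fun h => by simp at hsum)
  have hcard : (0 : ℝ) < Fintype.card ι := by exact_mod_cast Fintype.card_pos_iff.mpr hne.to_type
  obtain ⟨θ, -, hθ⟩ := exists_le_of_sum_le hne (f := fun _ => (Fintype.card ι : ℝ)⁻¹) (g := μ)
    (by simp [hsum, hcard.ne'])
  have hθpos : 0 < μ θ := (inv_pos.mpr hcard).trans_le hθ
  refine ⟨θ, ?_⟩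
  rw [← log_inv]
  exact log_le_log (inv_pos.mpr hθpos) ((inv_le_comm₀ hθpos hcard).mpr hθ)

variable [DecidableEq ι]

theorem bregman_sum_mul_log_indicator {μ : ι → ℝ} (hsum : ∑ i, μ i = 1) (θ : ι) :
    ∑ i, (if i = θ then 1 else 0) * log (if i = θ then 1 else 0) - ∑ i, μ i * log (μ i) -
      ∑ i, (log (μ i) + 1) * ((if i = θ then 1 else 0) - μ i) = -log (μ θ) := by
  have hexpand : ∀ i, (log (μ i) + 1) * ((if i = θ then 1 else 0) - μ i) =
      (if i = θ then log (μ θ) + 1 else 0) - (μ i * log (μ i) + μ i) := fun i => by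
    split_ifs with h
    · rw [h]; ring
    · ring
  simp only [hexpand, apply_ite (fun t => t * log t), log_one, log_zero, mul_zero, ite_self,
    sum_const_zero, sum_sub_distrib, sum_add_distrib, sum_ite_eq', mem_univ, if_true, hsum]
  ring

theorem sum_indicator_sub_mul_indicator_sub_div {μ : ι → ℝ} (hμ : ∀ i, μ i ≠ 0) {θ θ' : ι}
    (h : θ ≠ θ') :
    ∑ i, ((if i = θ then 1 else 0) - μ i) * ((if i = θ' then 1 else 0) - μ i) / μ i =
      ∑ i, μ i - 2 := by
  have hexpand : ∀ i, ((if i = θ then 1 else 0) - μ i) * ((if i = θ' then 1 else 0) - μ i) / μ i =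
      μ i - (if i = θ then 1 else 0) - (if i = θ' then 1 else 0) := fun i => by
    have := hμ i
    split_ifs with hθ hθ'
    · exact absurd (hθ.symm.trans hθ') h
    all_goals field_simp; ring
  simp only [hexpand, sum_sub_distrib, sum_ite_eq', mem_univ, if_true]
  ring

end Entropy

theorem kl_divergence_assumption_one_general {n : ℕ}
    (μ : Fin n → ℝ) (hpos : ∀ i, 0 < μ i) (hsum : ∑ i, μ i = 1) :
    let e : Fin n → Fin n → ℝ := fun θ i => if i = θ then 1 else 0
    let HS : (Fin n → ℝ) → ℝ := fun x => ∑ i, x i * log (x i)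
    -- Bregman divergence of HS with gradient ∇HS(μ)(i) = log μ(i) + 1
    let D : (Fin n → ℝ) → (Fin n → ℝ) → ℝ :=
      fun ν μ' => HS ν - HS μ' - ∑ i, (log (μ' i) + 1) * (ν i - μ' i)
    -- degree-1 homogeneous extension of HS
    let Hext : (Fin n → ℝ) → ℝ := fun x => ∑ i, x i * log (x i / ∑ j, x j)
    (∀ θ, D (e θ) μ = -log (μ θ)) ∧
    (∃ θ, D (e θ) μ ≤ log n) ∧
    (∀ θ, (∀ θ', θ' ≠ θ → μ θ ≤ (1 / n) * μ θ') → (∃ θ'', μ θ < μ θ'') →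
      ∃ θ', θ' ≠ θ ∧ D (e θ') μ < D (e θ) μ) ∧
    (∀ θ θ', θ ≠ θ' →
      iteratedFDeriv ℝ 2 Hext μ ![fun i => e θ i - μ i, fun i => e θ' i - μ i] ≤ 0) := by
  intro e HS D Hext
  have hdiv : ∀ θ, D (e θ) μ = -log (μ θ) := bregman_sum_mul_log_indicator hsum
  refine ⟨hdiv, ?_, ?_, ?_⟩
  · obtain ⟨θ, hθ⟩ := exists_neg_log_le_log_card hsum
    exact ⟨θ, (hdiv θ).trans_le (by simpa using hθ)⟩
  · rintro θ - ⟨θ'', hlt⟩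
    refine ⟨θ'', fun h => hlt.ne (by rw [h]), ?_⟩
    rw [hdiv, hdiv]
    exact neg_lt_neg (log_lt_log (hpos θ) hlt)
  · intro θ θ' hne
    have hμ : ∀ i, μ i ≠ 0 := fun i => (hpos i).ne'
    have hcentered : ∑ i, (e θ i - μ i) = 0 := by simp [e, sum_sub_distrib, hsum]
    show iteratedFDeriv ℝ 2 (fun x : Fin n → ℝ => ∑ i, x i * log (x i / ∑ j, x j)) μ _ ≤ 0
    rw [iteratedFDeriv_two_sum_mul_log_div_sum hμ (by simp [hsum]),
      sum_indicator_sub_mul_indicator_sub_div hμ hne, hcentered, hsum]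
    norm_num

/-- The KL case: for `H(μ) = Σ μ(θ) log μ(θ)`, the Bregman divergence to degenerate
beliefs is `D(e_θ ∣ μ) = -log μ(θ)`; it satisfies (i) `min_θ D(e_θ ∣ μ) ≤ log n`,
(ii) a state with sufficiently small probability (`μ(θ) ≤ (1/n)·min_{θ'≠θ} μ(θ')`,
with `μ(θ)` below the maximum) is not the closest state, and
(iii) for the degree-1 homogeneous extension `H(x) = Σ x(θ) log(x(θ)/Σx)`, the mixed
Hessian condition `(e_θ - μ)ᵀ Hess H(μ) (e_{θ'} - μ) ≤ 0` holds for `θ ≠ θ'`. -/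
theorem kl_divergence_assumption_one {n : ℕ} (hn : 2 ≤ n)
    (μ : Fin n → ℝ) (hpos : ∀ i, 0 < μ i) (hsum : ∑ i, μ i = 1) :
    let e : Fin n → Fin n → ℝ := fun θ i => if i = θ then 1 else 0
    let HS : (Fin n → ℝ) → ℝ := fun x => ∑ i, x i * log (x i)
    -- Bregman divergence of HS with gradient ∇HS(μ)(i) = log μ(i) + 1
    let D : (Fin n → ℝ) → (Fin n → ℝ) → ℝ :=
      fun ν μ' => HS ν - HS μ' - ∑ i, (log (μ' i) + 1) * (ν i - μ' i)
    -- degree-1 homogeneous extension of HS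
    let Hext : (Fin n → ℝ) → ℝ := fun x => ∑ i, x i * log (x i / ∑ j, x j)
    (∀ θ, D (e θ) μ = -log (μ θ)) ∧
    (∃ θ, D (e θ) μ ≤ log n) ∧
    (∀ θ, (∀ θ', θ' ≠ θ → μ θ ≤ (1 / n) * μ θ') → (∃ θ'', μ θ < μ θ'') →
      ∃ θ', θ' ≠ θ ∧ D (e θ') μ < D (e θ) μ) ∧
    (∀ θ θ', θ ≠ θ' →
      iteratedFDeriv ℝ 2 Hext μ ![fun i => e θ i - μ i, fun i => e θ' i - μ i] ≤ 0) :=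
  kl_divergence_assumption_one_general μ hpos hsum
end

section
/- Let X be an exponential random variable with rate 1/2 (density f*(t) = (1/2)e^{-t/2}). For r ∈ (1, 2], ∫₀^{T(r)} (1/2)e^{-(r+1/2)t}(1 - t(r-1)) dt > 0 where T(r) = 1/(r-1), and the total revenue ∫₁² ∫₀^{1/(r-1)} (1/2)e^{-(r+1/2)t}(1 - t(r-1)) dt dr equals (1/5)(1 - e^{-5/2}) + (1/2)e^{-1}·∫_{3/2}^∞ (e^{-z}/z) dz. -/
open Real Set MeasureTheory

lemma inner_closed (r : ℝ) (hr : 1 < r) :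
    (∫ t in (0:ℝ)..(1/(r-1)), (1/2) * exp (-(r + 1/2) * t) * (1 - t * (r - 1)))
      = 3/(4*(r+1/2)^2) + (r-1) * exp (-((r+1/2)/(r-1))) / (2*(r+1/2)^2) := by
  have hb : (0:ℝ) < r - 1 := by linarith
  have ha : (0:ℝ) < r + 1/2 := by linarith
  have ha' : (r + 1/2) ≠ 0 := ne_of_gt ha
  have hb' : (r - 1) ≠ 0 := ne_of_gt hb
  set a := r + 1/2 with haa
  set b := r - 1 with hbb
  have key : ∀ t : ℝ, HasDerivAt (fun t => exp (-a*t) * ((b/(2*a))*t - 3/(4*a^2)))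
      ((1/2) * exp (-a * t) * (1 - t * b)) t := by
    intro t
    have h1 : HasDerivAt (fun t : ℝ => -a*t) (-a) t := by
      simpa using (hasDerivAt_id t).const_mul (-a)
    have h2 : HasDerivAt (fun t : ℝ => exp (-a*t)) (exp (-a*t) * (-a)) t := h1.exp
    have h3 : HasDerivAt (fun t : ℝ => (b/(2*a))*t - 3/(4*a^2)) (b/(2*a)) t := by
      simpa using ((hasDerivAt_id t).const_mul (b/(2*a))).sub_const (3/(4*a^2))
    have := h2.mul h3
    refine this.congr_deriv ?_
    have h4 : a - b = 3/2 := by rw [haa, hbb]; ring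
    rw [show b = a - 3/2 by linarith]
    field_simp
    ring
  rw [intervalIntegral.integral_eq_sub_of_hasDerivAt (fun t _ => key t) ?_]
  · have : -a * (1/b) = -(a/b) := by field_simp
    rw [this]
    field_simp
    simp only [mul_zero, neg_zero, exp_zero]
    rw [haa, hbb]
    ring
  · apply Continuous.intervalIntegrable
    continuity

lemma part1 : ∫ r in (1:ℝ)..2, 3/(4*(r+1/2)^2) = 1/5 := by
  have key : ∀ r ∈ Set.uIcc (1:ℝ) 2, HasDerivAt (fun r : ℝ => -3/4 * (r+1/2)⁻¹)
      (3/(4*(r+1/2)^2)) r := by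
    intro r hr
    rw [uIcc_of_le (by norm_num)] at hr
    have hne : r + 1/2 ≠ 0 := by have := hr.1; positivity
    have h1 : HasDerivAt (fun r : ℝ => r + 1/2) 1 r := by
      simpa using (hasDerivAt_id r).add_const (1/2:ℝ)
    have h2 := (h1.inv hne).const_mul (-3/4 : ℝ)
    refine h2.congr_deriv ?_
    rw [mul_div_assoc', div_eq_div_iff (pow_ne_zero 2 hne) (mul_ne_zero (by norm_num) (pow_ne_zero 2 hne))]
    ring
  rw [intervalIntegral.integral_eq_sub_of_hasDerivAt key ?_]
  · norm_num
  · apply ContinuousOn.intervalIntegrable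
    intro r hr
    rw [uIcc_of_le (by norm_num)] at hr
    have h := hr.1
    exact (continuousOn_const.div (by fun_prop)
      (fun x hx => by
        rw [uIcc_of_le (by norm_num)] at hx
        have := hx.1; positivity)) r (by rw [uIcc_of_le (by norm_num)]; exact hr)

lemma hm1 : Measurable (fun z : ℝ => exp (-z)/z + exp (-z)/z^2) := by fun_prop

lemma int2 : IntegrableOn (fun z : ℝ => exp (-z)/z + exp (-z)/z^2) (Ioi (5/2:ℝ)) := by
  have hexp : IntegrableOn (fun z : ℝ => 2 * exp (-1 * z)) (Ioi (5/2:ℝ)) :=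
    (exp_neg_integrableOn_Ioi _ one_pos).const_mul 2
  refine Integrable.mono hexp hm1.aestronglyMeasurable.restrict ?_
  rw [ae_restrict_iff' measurableSet_Ioi]
  filter_upwards with z hz
  have hz1 : (1:ℝ) < z := lt_trans (by norm_num) hz
  have hz0 : (0:ℝ) < z := by linarith
  have he : (0:ℝ) < exp (-z) := exp_pos _
  have h1 : exp (-z)/z ≤ exp (-z) := by
    rw [div_le_iff₀ hz0]; nlinarith
  have h2 : exp (-z)/z^2 ≤ exp (-z) := by
    rw [div_le_iff₀ (by positivity)]
    nlinarith [mul_pos he (show (0:ℝ) < z^2 - 1 by nlinarith)]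
  rw [Real.norm_eq_abs, Real.norm_eq_abs, abs_of_nonneg (by positivity),
    abs_of_nonneg (by positivity)]
  rw [neg_one_mul]
  linarith

lemma int1 : IntegrableOn (fun z : ℝ => exp (-z)/(z-1)) (Ioi (5/2:ℝ)) := by
  have hexp : IntegrableOn (fun z : ℝ => exp (-1 * z)) (Ioi (5/2:ℝ)) :=
    exp_neg_integrableOn_Ioi _ one_pos
  refine Integrable.mono hexp (by fun_prop : Measurable fun z : ℝ => exp (-z)/(z-1)).aestronglyMeasurable.restrict ?_
  rw [ae_restrict_iff' measurableSet_Ioi]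
  filter_upwards with z hz
  have hz1 : (1:ℝ) < z - 1 := by have : (5/2:ℝ) < z := hz; linarith
  have he : (0:ℝ) < exp (-z) := exp_pos _
  rw [Real.norm_eq_abs, Real.norm_eq_abs, abs_of_nonneg (by positivity),
    abs_of_nonneg (by positivity), neg_one_mul, div_le_iff₀ (by linarith)]
  nlinarith

lemma sub1 : ∫ z in Ioi (5/2:ℝ), (exp (-z)/z + exp (-z)/z^2) = (2/5) * exp (-(5/2)) := by
  have hderiv : ∀ z ∈ Ioi (5/2:ℝ), HasDerivAt (fun z : ℝ => -(exp (-z)/z))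
      (exp (-z)/z + exp (-z)/z^2) z := by
    intro z hz
    have hz0 : z ≠ 0 := by have : (5/2:ℝ) < z := hz; positivity
    have h1 : HasDerivAt (fun z : ℝ => exp (-z)) (-exp (-z)) z := by
      simpa using (hasDerivAt_neg z).exp
    have h2 : HasDerivAt (fun z : ℝ => exp (-z)/z)
        ((-exp (-z) * z - exp (-z) * 1)/z^2) z := h1.div (hasDerivAt_id z) hz0
    have h3 := h2.neg
    refine h3.congr_deriv ?_
    rw [neg_div', div_add_div _ _ hz0 (pow_ne_zero 2 hz0), div_eq_div_iff (pow_ne_zero 2 hz0) (mul_ne_zero hz0 (pow_ne_zero 2 hz0))]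
    ring
  have hcont : ContinuousWithinAt (fun z : ℝ => -(exp (-z)/z)) (Ici (5/2:ℝ)) (5/2) := by
    apply ContinuousAt.continuousWithinAt
    have : (5/2:ℝ) ≠ 0 := by norm_num
    fun_prop (disch := norm_num)
  have htend : Filter.Tendsto (fun z : ℝ => -(exp (-z)/z)) Filter.atTop (nhds 0) := by
    have h1 : Filter.Tendsto (fun z : ℝ => exp (-z)) Filter.atTop (nhds 0) := by
      simpa using Real.tendsto_exp_neg_atTop_nhds_zero
    have h2 : Filter.Tendsto (fun z : ℝ => z⁻¹) Filter.atTop (nhds 0) :=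
      tendsto_inv_atTop_zero
    have := (h1.mul h2).neg
    simpa [div_eq_mul_inv] using this
  have := integral_Ioi_of_hasDerivAt_of_tendsto hcont hderiv int2 htend
  rw [this]
  norm_num
  ring

lemma sub2 : ∫ z in Ioi (5/2:ℝ), exp (-z)/(z-1)
    = exp (-1) * ∫ z in Ioi (3/2:ℝ), exp (-z)/z := by
  have himg : (fun x : ℝ => x + 1) '' Ioi (3/2:ℝ) = Ioi (5/2:ℝ) := by
    rw [image_add_const_Ioi]; norm_num
  have hderiv : ∀ x ∈ Ioi (3/2:ℝ), HasDerivWithinAt (fun x : ℝ => x + 1) (1:ℝ) (Ioi (3/2:ℝ)) x :=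
    fun x _ => ((hasDerivAt_id x).add_const 1).hasDerivWithinAt
  have hinj : InjOn (fun x : ℝ => x + 1) (Ioi (3/2:ℝ)) := fun a _ b _ h => by simpa using h
  have := integral_image_eq_integral_abs_deriv_smul measurableSet_Ioi hderiv hinj
    (fun z => exp (-z)/(z-1))
  rw [himg] at this
  rw [this, ← integral_const_mul]
  apply setIntegral_congr_fun measurableSet_Ioi
  intro z hz
  have hz0 : z ≠ 0 := by have : (3/2:ℝ) < z := hz; positivity
  simp only [smul_eq_mul, abs_one, one_mul, add_sub_cancel_right]
  rw [show -(z+1) = -1 + -z by ring, exp_add]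
  ring

lemma sub3 : ∫ z in Ioi (5/2:ℝ), exp (-z)/(2*(z-1)*z^2)
    = -(1/5)*exp (-(5/2)) + (1/2)*exp (-1) * ∫ z in Ioi (3/2:ℝ), exp (-z)/z := by
  have hcongr : ∫ z in Ioi (5/2:ℝ), exp (-z)/(2*(z-1)*z^2)
      = ∫ z in Ioi (5/2:ℝ), ((1/2) * (exp (-z)/(z-1)) - (1/2) * (exp (-z)/z + exp (-z)/z^2)) := by
    apply setIntegral_congr_fun measurableSet_Ioi
    intro z hz
    have hz' : (5/2:ℝ) < z := hz
    have hz0 : z ≠ 0 := by positivity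
    have hz1 : z - 1 ≠ 0 := by intro h; rw [sub_eq_zero] at h; linarith [h ▸ hz']
    field_simp
    ring
  rw [hcongr, integral_sub (int1.const_mul _) (int2.const_mul _),
    MeasureTheory.integral_const_mul, MeasureTheory.integral_const_mul, sub1, sub2]
  ring

lemma sub4' : ∫ r in Ioo (1:ℝ) 2, (r-1) * exp (-((r+1/2)/(r-1))) / (2*(r+1/2)^2)
    = ∫ z in Ioi (5/2:ℝ), exp (-z)/(2*(z-1)*z^2) := by
  set f : ℝ → ℝ := fun r => 1 + (3/2) * (r-1)⁻¹ with hf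
  have himg : f '' Ioo (1:ℝ) 2 = Ioi (5/2:ℝ) := by
    ext z
    constructor
    · rintro ⟨r, ⟨h1, h2⟩, rfl⟩
      have hb : (0:ℝ) < r - 1 := by linarith
      have hb1 : r - 1 < 1 := by linarith
      have : (1:ℝ) < (r-1)⁻¹ := (one_lt_inv₀ hb).mpr hb1
      show (5/2:ℝ) < 1 + (3/2) * (r-1)⁻¹
      nlinarith
    · intro hz
      have hz' : (5/2:ℝ) < z := hz
      refine ⟨1 + (3/2)/(z-1), ⟨?_, ?_⟩, ?_⟩
      · have : (0:ℝ) < (3/2)/(z-1) := by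
          apply div_pos (by norm_num); linarith
        linarith
      · have : (3/2:ℝ)/(z-1) < 1 := by
          rw [div_lt_one (by linarith)]; linarith
        linarith
      · show 1 + (3/2) * ((1 + (3/2)/(z-1)) - 1)⁻¹ = z
        have hz1 : z - 1 ≠ 0 := by intro h; rw [sub_eq_zero] at h; linarith [h ▸ hz']
        field_simp
        ring
  have hderiv : ∀ r ∈ Ioo (1:ℝ) 2,
      HasDerivWithinAt f ((3/2) * (-1/(r-1)^2)) (Ioo (1:ℝ) 2) r := by
    intro r hr
    have hb : r - 1 ≠ 0 := by have := hr.1; intro h; rw [sub_eq_zero] at h; linarith [h ▸ hr.1]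
    have h1 : HasDerivAt (fun r : ℝ => r - 1) 1 r := by
      simpa using (hasDerivAt_id r).sub_const 1
    have h2 := ((h1.inv hb).const_mul (3/2:ℝ)).const_add 1
    exact (h2.congr_deriv (by ring)).hasDerivWithinAt
  have hinj : InjOn f (Ioo (1:ℝ) 2) := by
    intro x hx y hy hxy
    have hbx : x - 1 ≠ 0 := by intro h; rw [sub_eq_zero] at h; linarith [h ▸ hx.1]
    have hby : y - 1 ≠ 0 := by intro h; rw [sub_eq_zero] at h; linarith [h ▸ hy.1]
    have h1 : (x-1)⁻¹ = (y-1)⁻¹ := by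
      have := add_left_cancel hxy
      exact mul_left_cancel₀ (by norm_num : (3/2:ℝ) ≠ 0) this
    have := inv_injective h1
    linarith [sub_left_injective.eq_iff.mp this]
  have key := integral_image_eq_integral_abs_deriv_smul measurableSet_Ioo hderiv hinj
    (fun z => exp (-z)/(2*(z-1)*z^2))
  rw [himg] at key
  rw [key]
  apply setIntegral_congr_fun measurableSet_Ioo
  intro r hr
  have hb : (0:ℝ) < r - 1 := by linarith [hr.1]
  have ha : (0:ℝ) < r + 1/2 := by linarith [hr.1]
  have hb' : r - 1 ≠ 0 := ne_of_gt hb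
  have ha' : r + 1/2 ≠ 0 := ne_of_gt ha
  have hfr : f r = (r+1/2)/(r-1) := by rw [hf]; field_simp; ring
  have habs : |(3/2) * (-1/(r-1)^2)| = (3/2) * (1/(r-1)^2) := by
    rw [show (3/2:ℝ) * (-1/(r-1)^2) = -((3/2) * (1/(r-1)^2)) by ring, abs_neg,
      abs_of_nonneg (by positivity)]
  show (r-1) * exp (-((r+1/2)/(r-1))) / (2*(r+1/2)^2)
      = |(3/2) * (-1/(r-1)^2)| • (exp (-(f r))/(2*(f r - 1)*(f r)^2))
  rw [smul_eq_mul, habs, hfr]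
  have h5 : (r+1/2)/(r-1) - 1 = (3/2)/(r-1) := by field_simp; ring
  rw [h5, div_pow]
  have hE := exp_pos (-((r+1/2)/(r-1)))
  set E := exp (-((r+1/2)/(r-1)))
  rw [mul_div_assoc']
  rw [div_eq_div_iff (by positivity) (by positivity)]
  field_simp

lemma intp2 : IntervalIntegrable
    (fun r : ℝ => (r-1) * exp (-((r+1/2)/(r-1))) / (2*(r+1/2)^2)) volume 1 2 := by
  rw [intervalIntegrable_iff_integrableOn_Ioc_of_le (by norm_num)]
  apply Measure.integrableOn_of_bounded (M := 1) measure_Ioc_lt_top.ne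
  · exact ((by fun_prop : Measurable fun r : ℝ =>
      (r-1) * exp (-((r+1/2)/(r-1))) / (2*(r+1/2)^2))).aestronglyMeasurable
  · rw [ae_restrict_iff' measurableSet_Ioc]
    filter_upwards with r hr
    have hb : (0:ℝ) < r - 1 := by linarith [hr.1]
    have ha : (0:ℝ) < r + 1/2 := by linarith [hr.1]
    have hE1 : exp (-((r+1/2)/(r-1))) ≤ 1 := by
      rw [exp_le_one_iff]
      have : (0:ℝ) ≤ (r+1/2)/(r-1) := le_of_lt (div_pos ha hb)
      linarith
    have hE0 : (0:ℝ) < exp (-((r+1/2)/(r-1))) := exp_pos _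
    rw [Real.norm_eq_abs, abs_of_nonneg (div_nonneg (mul_nonneg hb.le hE0.le) (by positivity))]
    rw [div_le_one (by positivity)]
    have hr2 : r - 1 ≤ 1 := by linarith [hr.2]
    nlinarith

lemma part2 : ∫ r in (1:ℝ)..2, (r-1) * exp (-((r+1/2)/(r-1))) / (2*(r+1/2)^2)
    = -(1/5)*exp (-(5/2)) + (1/2)*exp (-1) * ∫ z in Ioi (3/2:ℝ), exp (-z)/z := by
  rw [intervalIntegral.integral_of_le (by norm_num), integral_Ioc_eq_integral_Ioo, sub4', sub3]

lemma intp1 : IntervalIntegrable (fun r : ℝ => 3/(4*(r+1/2)^2)) volume 1 2 := by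
  apply ContinuousOn.intervalIntegrable
  intro r hr
  rw [uIcc_of_le (by norm_num)] at hr
  exact (continuousOn_const.div (by fun_prop)
    (fun x hx => by
      rw [uIcc_of_le (by norm_num)] at hx
      have := hx.1; positivity)) r (by rw [uIcc_of_le (by norm_num)]; exact hr)

/-- Optimal revenue in the leading example: the virtual value of each type
`r ∈ (1,2]` is strictly positive, and the total revenue
`∫₁² ∫₀^{1/(r-1)} (1/2)e^{-(r+1/2)t}(1 - t(r-1)) dt dr` equals
`(1/5)(1 - e^{-5/2}) + (1/2)e^{-1}·∫_{3/2}^∞ e^{-z}/z dz`. -/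
theorem optimal_revenue_example :
    (∀ r ∈ Ioc (1:ℝ) 2,
      0 < ∫ t in (0:ℝ)..(1/(r-1)), (1/2) * exp (-(r + 1/2) * t) * (1 - t * (r - 1))) ∧
    (∫ r in (1:ℝ)..2, ∫ t in (0:ℝ)..(1/(r-1)),
        (1/2) * exp (-(r + 1/2) * t) * (1 - t * (r - 1)))
      = (1/5) * (1 - exp (-5/2))
        + (1/2) * exp (-1) * ∫ z in Ioi (3/2 : ℝ), exp (-z) / z := by
  constructor
  · intro r hr
    rw [inner_closed r hr.1]
    have hb : (0:ℝ) < r - 1 := by linarith [hr.1]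
    have ha : (0:ℝ) < r + 1/2 := by linarith [hr.1]
    have h1 : (0:ℝ) < 3/(4*(r+1/2)^2) := by positivity
    have h2 : (0:ℝ) ≤ (r-1) * exp (-((r+1/2)/(r-1))) / (2*(r+1/2)^2) :=
      div_nonneg (mul_nonneg hb.le (exp_pos _).le) (by positivity)
    linarith
  · have hcongr : (∫ r in (1:ℝ)..2, ∫ t in (0:ℝ)..(1/(r-1)),
        (1/2) * exp (-(r + 1/2) * t) * (1 - t * (r - 1)))
        = ∫ r in (1:ℝ)..2,
          (3/(4*(r+1/2)^2) + (r-1) * exp (-((r+1/2)/(r-1))) / (2*(r+1/2)^2)) := by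
      apply intervalIntegral.integral_congr_ae
      apply Filter.Eventually.of_forall
      intro r hr
      rw [uIoc_of_le (by norm_num)] at hr
      exact inner_closed r hr.1
    rw [hcongr, intervalIntegral.integral_add intp1 intp2, part1, part2]
    have h52 : (-5/2 : ℝ) = -(5/2) := by norm_num
    rw [h52]
    ring
end
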